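/- For any set V of three 2×2 unitary matrices, the diversity sum min_{X ≠ Y ∈ V} (1/(2√2))‖X − Y‖_F is at most √3/2, and the supremum √3/2 over all such three-element constellations is attained. -/

import Mathlib

open Matrix

/-- The Frobenius norm of a complex matrix: `‖A‖_F = √(∑ᵢⱼ |aᵢⱼ|²)`. -/
noncomputable def frobNorm {M : ℕ} (A : Matrix (Fin M) (Fin M) ℂ) : ℝ :=
  Real.sqrt (∑ i, ∑ j, ‖A i j‖ ^ 2)

/-- The pairwise diversity-sum distance `(1/(2√2))‖X − Y‖_F` for `2 × 2`
matrices. -/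
noncomputable def dsum (X Y : Matrix (Fin 2) (Fin 2) ℂ) : ℝ :=
  (1 / (2 * Real.sqrt 2)) * frobNorm (X - Y)

/-!
Flattening a matrix to a vector of `EuclideanSpace ℂ (Fin 2 × Fin 2)` turns the Frobenius norm
into a Euclidean norm, and a `2 × 2` unitary matrix becomes a vector of norm `√2`. In any real
inner product space `‖x - y‖² + ‖x - z‖² + ‖y - z‖² + ‖x + y + z‖² = 3 (‖x‖² + ‖y‖² + ‖z‖²)`,
so three vectors of norm `√2` have a pair at distance at most `√6`, i.e. diversity sum at most
`√3 / 2`. Equality holds for the scalar matrices `1, ω, ω²` with `ω` a primitive cube root of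
unity, whose pairwise differences have modulus `√3`.
-/

section InnerProductSpace

variable {E : Type*} [NormedAddCommGroup E] [InnerProductSpace ℝ E]

theorem norm_sub_sq_add_norm_sub_sq_add_norm_sub_sq_add_norm_add_add_sq (x y z : E) :
    ‖x - y‖ ^ 2 + ‖x - z‖ ^ 2 + ‖y - z‖ ^ 2 + ‖x + y + z‖ ^ 2 =
      3 * (‖x‖ ^ 2 + ‖y‖ ^ 2 + ‖z‖ ^ 2) := by
  simp only [norm_sub_sq_real, norm_add_sq_real, inner_add_left]
  ring

theorem min_norm_sub_le_sqrt_three_mul_of_norm_eq {x y z : E} {r : ℝ} (hx : ‖x‖ = r)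
    (hy : ‖y‖ = r) (hz : ‖z‖ = r) : min (min ‖x - y‖ ‖x - z‖) ‖y - z‖ ≤ √3 * r := by
  set m := min (min ‖x - y‖ ‖x - z‖) ‖y - z‖
  have hxy : m ≤ ‖x - y‖ := (min_le_left _ _).trans (min_le_left _ _)
  have hxz : m ≤ ‖x - z‖ := (min_le_left _ _).trans (min_le_right _ _)
  have hyz : m ≤ ‖y - z‖ := min_le_right _ _
  have hm : 0 ≤ m := le_min (le_min (norm_nonneg _) (norm_nonneg _)) (norm_nonneg _)
  have hr : 0 ≤ r := hx ▸ norm_nonneg x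
  have hsum := norm_sub_sq_add_norm_sub_sq_add_norm_sub_sq_add_norm_add_add_sq x y z
  rw [hx, hy, hz] at hsum
  rw [← pow_le_pow_iff_left₀ hm (by positivity) two_ne_zero, mul_pow,
    Real.sq_sqrt zero_le_three]
  nlinarith [pow_le_pow_left₀ hm hxy 2, pow_le_pow_left₀ hm hxz 2, pow_le_pow_left₀ hm hyz 2,
    sq_nonneg ‖x + y + z‖]

end InnerProductSpace

def frobVec {M : ℕ} (A : Matrix (Fin M) (Fin M) ℂ) : EuclideanSpace ℂ (Fin M × Fin M) :=
  WithLp.toLp 2 fun p => A p.1 p.2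

theorem frobVec_sub {M : ℕ} (A B : Matrix (Fin M) (Fin M) ℂ) :
    frobVec (A - B) = frobVec A - frobVec B :=
  rfl

theorem frobNorm_eq_norm_frobVec {M : ℕ} (A : Matrix (Fin M) (Fin M) ℂ) :
    frobNorm A = ‖frobVec A‖ := by
  rw [frobNorm, EuclideanSpace.norm_eq, Fintype.sum_prod_type]
  rfl

theorem sum_sum_norm_sq_of_conjTranspose_mul_self_eq_one {n 𝕜 : Type*} [Fintype n]
    [DecidableEq n] [RCLike 𝕜] {X : Matrix n n 𝕜} (hX : Xᴴ * X = 1) :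
    ∑ i, ∑ j, ‖X i j‖ ^ 2 = Fintype.card n := by
  have hcol : ∀ j, ∑ i, ‖X i j‖ ^ 2 = (1 : ℝ) := fun j => by
    have h := congrFun (congrFun hX j) j
    simp only [mul_apply, conjTranspose_apply, RCLike.star_def, RCLike.conj_mul, one_apply_eq] at h
    exact_mod_cast h
  rw [Finset.sum_comm, Finset.sum_congr rfl fun j _ => hcol j]
  simp

theorem frobNorm_of_conjTranspose_mul_self_eq_one {M : ℕ} {X : Matrix (Fin M) (Fin M) ℂ}
    (hX : Xᴴ * X = 1) : frobNorm X = √M := by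
  rw [frobNorm, sum_sum_norm_sq_of_conjTranspose_mul_self_eq_one hX, Fintype.card_fin]

theorem frobNorm_smul_one {M : ℕ} (c : ℂ) :
    frobNorm (c • 1 : Matrix (Fin M) (Fin M) ℂ) = √M * ‖c‖ := by
  simp [frobNorm, one_apply, apply_ite]

theorem dsum_eq_norm_sub_div (X Y : Matrix (Fin 2) (Fin 2) ℂ) :
    dsum X Y = ‖frobVec X - frobVec Y‖ / (2 * √2) := by
  rw [dsum, frobNorm_eq_norm_frobVec, frobVec_sub, one_div_mul_eq_div]

theorem dsum_smul_one (a b : ℂ) : dsum (a • 1) (b • 1) = ‖a - b‖ / 2 := by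
  rw [dsum, ← sub_smul, frobNorm_smul_one]
  push_cast
  field_simp

theorem min_dsum_le_sqrt_three_div_two {X Y Z : Matrix (Fin 2) (Fin 2) ℂ}
    (hX : Xᴴ * X = 1) (hY : Yᴴ * Y = 1) (hZ : Zᴴ * Z = 1) :
    min (min (dsum X Y) (dsum X Z)) (dsum Y Z) ≤ √3 / 2 := by
  have hnorm : ∀ {W : Matrix (Fin 2) (Fin 2) ℂ}, Wᴴ * W = 1 → ‖frobVec W‖ = √2 := fun hW => by
    rw [← frobNorm_eq_norm_frobVec, frobNorm_of_conjTranspose_mul_self_eq_one hW, Nat.cast_ofNat]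
  have h2 : (0 : ℝ) < 2 * √2 := by positivity
  simp only [dsum_eq_norm_sub_div, min_div_div_right h2.le, div_le_iff₀ h2]
  calc _ ≤ √3 * √2 := min_norm_sub_le_sqrt_three_mul_of_norm_eq (hnorm hX) (hnorm hY) (hnorm hZ)
    _ = √3 / 2 * (2 * √2) := by ring

theorem dsum_self (X : Matrix (Fin 2) (Fin 2) ℂ) : dsum X X = 0 := by
  simp [dsum, frobNorm]

theorem smul_one_conjTranspose_mul_self_eq_one {n : Type*} [Fintype n] [DecidableEq n] {c : ℂ}
    (hc : ‖c‖ = 1) : (c • 1 : Matrix n n ℂ)ᴴ * (c • 1) = 1 := by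
  simp [smul_smul, Complex.mul_conj', hc]

theorem exists_norm_eq_one_norm_sub_eq_sqrt_three :
    ∃ a b c : ℂ, ‖a‖ = 1 ∧ ‖b‖ = 1 ∧ ‖c‖ = 1 ∧
      ‖a - b‖ = √3 ∧ ‖a - c‖ = √3 ∧ ‖b - c‖ = √3 := by
  have h3 : √3 / 2 * (√3 / 2) = 3 / 4 := by ring_nf; norm_num
  refine ⟨1, ⟨-1 / 2, √3 / 2⟩, ⟨-1 / 2, -(√3 / 2)⟩, ?_, ?_, ?_, ?_, ?_, ?_⟩ <;>
    norm_num [Complex.norm_def, Complex.normSq_apply, h3]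

/-- **Optimal diversity sum of three-element `2 × 2` unitary constellations.**
Any three pairwise distinct `2 × 2` unitary matrices have diversity sum at most
`√3/2`, and the supremum `√3/2` is attained by some such constellation. -/
theorem three_element_dsum_optimal :
    (∀ X Y Z : Matrix (Fin 2) (Fin 2) ℂ,
      Xᴴ * X = 1 → Yᴴ * Y = 1 → Zᴴ * Z = 1 →
      X ≠ Y → X ≠ Z → Y ≠ Z →
      min (min (dsum X Y) (dsum X Z)) (dsum Y Z) ≤ Real.sqrt 3 / 2) ∧
    (∃ X Y Z : Matrix (Fin 2) (Fin 2) ℂ,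
      Xᴴ * X = 1 ∧ Yᴴ * Y = 1 ∧ Zᴴ * Z = 1 ∧
      X ≠ Y ∧ X ≠ Z ∧ Y ≠ Z ∧
      min (min (dsum X Y) (dsum X Z)) (dsum Y Z) = Real.sqrt 3 / 2) := by
  refine ⟨fun X Y Z hX hY hZ _ _ _ => min_dsum_le_sqrt_three_div_two hX hY hZ, ?_⟩
  obtain ⟨a, b, c, ha, hb, hc, hab, hac, hbc⟩ := exists_norm_eq_one_norm_sub_eq_sqrt_three
  have hdsum : ∀ {u v : ℂ}, ‖u - v‖ = √3 → dsum (u • 1) (v • 1) = √3 / 2 := fun h => by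
    rw [dsum_smul_one, h]
  have hne : ∀ {u v : ℂ}, ‖u - v‖ = √3 → (u • 1 : Matrix (Fin 2) (Fin 2) ℂ) ≠ v • 1 :=
    fun h huv => by
      have h0 := hdsum h
      rw [huv, dsum_self] at h0
      exact (by positivity : (0 : ℝ) < √3 / 2).ne h0
  refine ⟨a • 1, b • 1, c • 1, smul_one_conjTranspose_mul_self_eq_one ha,
    smul_one_conjTranspose_mul_self_eq_one hb, smul_one_conjTranspose_mul_self_eq_one hc,
    hne hab, hne hac, hne hbc, ?_⟩
  rw [hdsum hab, hdsum hac, hdsum hbc, min_self, min_self]
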